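/- arXiv:2103.05341 — 3 statements merged into one kernel-verified Lean document; each statement's English description precedes it below -/
import Mathlib

section
/- Fix $\lambda > 0$ and $M > 0$. Let $i^\infty(C^*)$ denote the smaller root of $x^2 - [(1+\lambda)C^* + M]x + MC^* = 0$. Then $\lim_{C^* \to \infty} i^\infty(C^*) = M/(1+\lambda)$. -/
/-!
With `a = 1 + λ` and `t = 1 / C*`, the smaller root equals `(g t - g 0) / t`, where
`g t = (a + M t - √(a² + 2(a - 2) M t + M² t²)) / 2` and `g 0 = 0` because `a > 0`.
Hence its limit as `C* → ∞` is `g'(0) = (M - (a - 2) M / a) / 2 = M / a`.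
-/

open Filter

noncomputable def rescaledSmallerRoot (a M t : ℝ) : ℝ :=
  (1 / 2) * (a + M * t - √(a ^ 2 + 2 * (a - 2) * M * t + M ^ 2 * t ^ 2))

section

variable {a : ℝ} (M : ℝ)

lemma rescaledSmallerRoot_zero (ha : 0 ≤ a) : rescaledSmallerRoot a M 0 = 0 := by
  simp [rescaledSmallerRoot, Real.sqrt_sq ha]

lemma hasDerivAt_rescaledSmallerRoot_zero (ha : 0 < a) :
    HasDerivAt (rescaledSmallerRoot a M) (M / a) 0 := by
  have hdisc : HasDerivAt (fun t : ℝ => a ^ 2 + 2 * (a - 2) * M * t + M ^ 2 * t ^ 2)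
      (2 * (a - 2) * M) 0 :=
    ((((hasDerivAt_id' 0).const_mul _).const_add _).add
      ((hasDerivAt_pow 2 0).const_mul (M ^ 2))).congr_deriv (by simp)
  have hsqrt := hdisc.sqrt (by simpa using ha.ne')
  refine ((((hasDerivAt_id' 0).const_mul M).const_add a).sub hsqrt).const_mul (1 / 2)
    |>.congr_deriv ?_
  simp only [mul_zero, add_zero, zero_pow two_ne_zero, Real.sqrt_sq ha.le]
  field_simp
  ring

lemma smallerRoot_eq_mul_rescaledSmallerRoot_inv {C : ℝ} (hC : 0 < C) :
    (1 / 2) * (a * C + M - √((a * C + M) ^ 2 - 4 * M * C))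
      = C * rescaledSmallerRoot a M C⁻¹ := by
  have hdisc : (a * C + M) ^ 2 - 4 * M * C
      = C ^ 2 * (a ^ 2 + 2 * (a - 2) * M * C⁻¹ + M ^ 2 * C⁻¹ ^ 2) := by
    field_simp
    ring
  rw [rescaledSmallerRoot, hdisc, Real.sqrt_mul (sq_nonneg C), Real.sqrt_sq hC.le]
  field_simp

end

theorem limit_infinite_receptors_general (lam M : ℝ) (hlam : 0 < lam) :
    Filter.Tendsto
      (fun Cstar : ℝ =>
        (1 / 2) * ((1 + lam) * Cstar + M -
          Real.sqrt (((1 + lam) * Cstar + M) ^ 2 - 4 * M * Cstar)))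
      Filter.atTop (nhds (M / (1 + lam))) := by
  have ha : 0 < 1 + lam := by linarith
  have hslope := (hasDerivAt_rescaledSmallerRoot_zero M ha).tendsto_slope_zero_right.comp
    tendsto_inv_atTop_nhdsGT_zero
  refine hslope.congr' ?_
  filter_upwards [eventually_gt_atTop 0] with C hC
  simp only [Function.comp_apply, inv_inv, zero_add, smul_eq_mul,
    rescaledSmallerRoot_zero M ha.le, sub_zero]
  exact (smallerRoot_eq_mul_rescaledSmallerRoot_inv M hC).symm

theorem limit_infinite_receptors (lam M : ℝ) (hlam : 0 < lam) (hM : 0 < M) :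
    Filter.Tendsto
      (fun Cstar : ℝ =>
        (1 / 2) * ((1 + lam) * Cstar + M -
          Real.sqrt (((1 + lam) * Cstar + M) ^ 2 - 4 * M * Cstar)))
      Filter.atTop (nhds (M / (1 + lam))) :=
  limit_infinite_receptors_general lam M hlam
end

section
/- The function $i^\infty(M)$ (smaller root of $x^2 - [(1+\lambda)C^* + M]x + MC^* = 0$, with $\lambda > 0$, $C^* > 0$ fixed) is concave in $M$ on $(0,\infty)$. -/
/-!
The discriminant equals `(M + (λ - 1) C*)² + 4 λ C*²`, so its square root is the modulus of the
affine map `M ↦ (M + (λ - 1) C*) + 2 √λ C* i` from `ℝ` to `ℂ`, hence convex; `i^∞` is an affine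
function minus half of it.
-/

open Set

theorem convexOn_sqrt_add_sq_add {a c : ℝ} (hc : 0 ≤ c) :
    ConvexOn ℝ univ (fun x : ℝ => √((x + a) ^ 2 + c)) := by
  let g : ℝ →ᵃ[ℝ] ℂ := Complex.ofRealAm.toLinearMap.toAffineMap +
    AffineMap.const ℝ ℝ ((a : ℂ) + √c * Complex.I)
  have hg : ∀ x, ‖g x‖ = √((x + a) ^ 2 + c) := fun x => by
    change ‖(x : ℂ) + ((a : ℂ) + √c * Complex.I)‖ = _
    rw [← add_assoc, ← Complex.ofReal_add, Complex.norm_add_mul_I, Real.sq_sqrt hc]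
  have := (convexOn_univ_norm (E := ℂ)).comp_affineMap g
  simpa only [preimage_univ, Function.comp_def, hg] using this

theorem steady_state_concave_general (lam Cstar : ℝ) (hlam : 0 < lam) :
    ConcaveOn ℝ (Set.Ioi 0)
      (fun M : ℝ =>
        (1 / 2) * ((1 + lam) * Cstar + M -
          Real.sqrt (((1 + lam) * Cstar + M) ^ 2 - 4 * M * Cstar))) := by
  have hdisc : ∀ M : ℝ, ((1 + lam) * Cstar + M) ^ 2 - 4 * M * Cstar =
      (M + (lam - 1) * Cstar) ^ 2 + 4 * lam * Cstar ^ 2 := fun M => by ring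
  have hsqrt := convexOn_sqrt_add_sq_add (a := (lam - 1) * Cstar)
    (by positivity : 0 ≤ 4 * lam * Cstar ^ 2)
  have hlin : ConcaveOn ℝ univ (fun M : ℝ => (1 + lam) * Cstar + M) :=
    concaveOn_const _ convex_univ |>.add (concaveOn_id convex_univ)
  have := ((hlin.sub hsqrt).smul (by norm_num : (0 : ℝ) ≤ 1 / 2)).subset
    (subset_univ _) (convex_Ioi 0)
  simpa only [hdisc, smul_eq_mul, Pi.sub_apply] using this

theorem steady_state_concave (lam Cstar : ℝ) (hlam : 0 < lam) (hC : 0 < Cstar) :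
    ConcaveOn ℝ (Set.Ioi 0)
      (fun M : ℝ =>
        (1 / 2) * ((1 + lam) * Cstar + M -
          Real.sqrt (((1 + lam) * Cstar + M) ^ 2 - 4 * M * Cstar))) :=
  steady_state_concave_general lam Cstar hlam
end

section
/- Let $f(\epsilon) = \frac{M}{2}\left\{(1+\lambda)\frac{C^*}{M} + 1 - \epsilon - \sqrt{\left[(1+\lambda)\frac{C^*}{M} + 1 - \epsilon\right]^2 - 4(1-\epsilon)\frac{C^*}{M}}\right\}$ with $\lambda > 0$, $C^*, M > 0$, and let $i = f(0)$. Then the derivative of $f$ at $\epsilon = 0$ equals $-\frac{i(C^* - i)}{C^*(1 - i^2/(MC^*))}$. -/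
/-!
After scaling by `M`, `f ε` is the smaller root of `x² - b(ε) x + p(ε)` with
`b(ε) = (1 + λ) C* + M (1 - ε)` and `p(ε) = M (1 - ε) C*`. Implicit differentiation gives
`f'(0) = (b' i - p') / (2 i - b)`, and the quadratic equation for `i` rewrites the
denominator as `2 i - b = (i² - M C*) / i`.
-/

noncomputable def smallerRoot (b p : ℝ) : ℝ := (b - √(b ^ 2 - 4 * p)) / 2

theorem smallerRoot_sq_sub_mul_add {b p : ℝ} (h : 0 ≤ b ^ 2 - 4 * p) :
    smallerRoot b p ^ 2 - b * smallerRoot b p + p = 0 := by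
  unfold smallerRoot
  linear_combination (1 / 4 : ℝ) * Real.sq_sqrt h

theorem two_mul_smallerRoot_sub (b p : ℝ) : 2 * smallerRoot b p - b = -√(b ^ 2 - 4 * p) := by
  unfold smallerRoot; ring

theorem smallerRoot_pos {b p : ℝ} (hb : 0 < b) (hp : 0 < p) : 0 < smallerRoot b p := by
  have : √(b ^ 2 - 4 * p) < b := (Real.sqrt_lt' hb).2 (by linarith)
  unfold smallerRoot; linarith

theorem HasDerivAt.smallerRoot {b p : ℝ → ℝ} {b' p' t : ℝ} (hb : HasDerivAt b b' t)
    (hp : HasDerivAt p p' t) (hD : 0 < b t ^ 2 - 4 * p t) :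
    HasDerivAt (fun ε => smallerRoot (b ε) (p ε))
      ((b' * smallerRoot (b t) (p t) - p') / (2 * smallerRoot (b t) (p t) - b t)) t := by
  have hs : 0 < √(b t ^ 2 - 4 * p t) := Real.sqrt_pos.2 hD
  have hsq : HasDerivAt (fun ε => √(b ε ^ 2 - 4 * p ε))
      ((2 * b t * b' - 4 * p') / (2 * √(b t ^ 2 - 4 * p t))) t := by
    convert ((hb.fun_pow 2).fun_sub (hp.const_mul 4)).sqrt hD.ne' using 1; norm_num
  refine ((hb.sub hsq).div_const 2).congr_deriv ?_
  rw [two_mul_smallerRoot_sub]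
  unfold _root_.smallerRoot
  field_simp
  ring

theorem scaling_law_derivative (lam Cstar M i : ℝ) (f : ℝ → ℝ)
    (hlam : 0 < lam) (hC : 0 < Cstar) (hM : 0 < M)
    (hf : f = fun ε : ℝ =>
      (M / 2) * ((1 + lam) * (Cstar / M) + 1 - ε -
        Real.sqrt (((1 + lam) * (Cstar / M) + 1 - ε) ^ 2 - 4 * (1 - ε) * (Cstar / M))))
    (hi : i = f 0) :
    deriv f 0 = -(i * (Cstar - i)) / (Cstar * (1 - i ^ 2 / (M * Cstar))) := by
  set b : ℝ → ℝ := fun ε => (1 + lam) * Cstar + M * (1 - ε)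
  set p : ℝ → ℝ := fun ε => M * (1 - ε) * Cstar
  have hf_root : f = fun ε => smallerRoot (b ε) (p ε) := by
    rw [hf]
    funext ε
    have hdisc : b ε ^ 2 - 4 * p ε = M ^ 2 *
        (((1 + lam) * (Cstar / M) + 1 - ε) ^ 2 - 4 * (1 - ε) * (Cstar / M)) := by
      simp only [b, p]; field_simp; ring
    rw [smallerRoot, hdisc, Real.sqrt_mul (sq_nonneg M), Real.sqrt_sq hM.le]
    field_simp
    ring
  have hD : 0 < b 0 ^ 2 - 4 * p 0 := by
    simp only [b, p]
    nlinarith [sq_nonneg ((1 + lam) * Cstar - M), mul_pos (mul_pos hlam hC) hM]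
  have hb : HasDerivAt b (-M) 0 := by
    simpa [b] using ((hasDerivAt_id (0 : ℝ)).const_sub 1).const_mul M
  have hp : HasDerivAt p (-M * Cstar) 0 := by
    simpa [p] using (((hasDerivAt_id (0 : ℝ)).const_sub 1).const_mul M).mul_const Cstar
  have hi_root : i = smallerRoot (b 0) (p 0) := by rw [hi, hf_root]
  have hquad : i ^ 2 - b 0 * i + p 0 = 0 := hi_root ▸ smallerRoot_sq_sub_mul_add hD.le
  have hi_pos : 0 < i := hi_root ▸ smallerRoot_pos (by simp only [b]; positivity)
    (by simp only [p]; positivity)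
  have hs : 2 * i - b 0 ≠ 0 := by
    rw [hi_root, two_mul_smallerRoot_sub, neg_ne_zero]; exact (Real.sqrt_pos.2 hD).ne'
  have hden : Cstar * (1 - i ^ 2 / (M * Cstar)) = -(i * (2 * i - b 0)) / M := by
    simp only [b, p] at hquad ⊢
    field_simp
    linear_combination hquad
  rw [hf_root, (hb.smallerRoot hp hD).deriv, ← hi_root, hden]
  field_simp
  ring
end
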